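/- Let S be a real n×n matrix such that det(I − SΣ) > 0 for every signature matrix Σ. Then the piecewise linear map φ : ℝⁿ → ℝⁿ defined by φ(z) = z + S|z| is a bijection. -/

import Mathlib

/-!
Write `φ z = z + S |z|`. The determinant `det (1 + S D)` of a diagonal `D` is affine in each diagonal
entry, so its positivity at the vertices `D = -Σ` of the cube `[-1, 1]ⁿ` propagates to the whole
cube. Every difference quotient of `φ` is such a matrix: `φ x - φ y = (1 + S D) (x - y)` with
`D i i = (|x i| - |y i|) / (x i - y i)`, which gives injectivity.

For surjectivity onto `b`, note that `φ` is continuous, positively homogeneous and vanishes only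
at `0`, hence coercive, so `‖φ z - b‖²` attains its minimum at some `z`. Varying one coordinate
of `z` at a time, the first-order conditions produce a diagonal `D` in the cube with
`rᵀ (1 + S D) = 0` for the residual `r = φ z - b`; hence `r = 0`.
-/

def IsSignature {n : ℕ} (M : Matrix (Fin n) (Fin n) ℝ) : Prop :=
  ∃ σ : Fin n → ℝ, (∀ i, σ i = 1 ∨ σ i = -1) ∧ M = Matrix.diagonal σ

open Matrix Filter Function Topology

section
variable {ι : Type*} [Fintype ι] [DecidableEq ι]

lemma exists_det_one_add_mul_diagonal_update_eq (S : Matrix ι ι ℝ) (d : ι → ℝ) (j : ι) :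
    ∃ A B : ℝ, ∀ t, (1 + S * diagonal (update d j t)).det = A + t * B := by
  set M := 1 + S * diagonal d
  refine ⟨(M.updateCol j (Pi.single j 1)).det, (M.updateCol j (S.col j)).det, fun t => ?_⟩
  have hcol : 1 + S * diagonal (update d j t) = M.updateCol j (Pi.single j 1 + t • S.col j) := by
    ext k l
    rcases eq_or_ne l j with rfl | hl
    · simp [one_apply, Pi.single_apply, mul_comm]
    · simp [M, hl]
  rw [hcol, det_updateCol_add, det_updateCol_smul]

lemma pos_of_affine_of_abs_le_one {A B t : ℝ} (h₁ : 0 < A + B) (h₂ : 0 < A - B) (ht : |t| ≤ 1) :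
    0 < A + t * B := by
  have : |t * B| ≤ |B| := by
    rw [abs_mul]
    exact mul_le_of_le_one_left (abs_nonneg B) ht
  cases abs_cases B <;> linarith [neg_abs_le (t * B)]

lemma pos_of_multiaffine_of_abs_le_one (F : (ι → ℝ) → ℝ)
    (hF : ∀ d j, ∃ A B : ℝ, ∀ t, F (update d j t) = A + t * B)
    (hvert : ∀ σ : ι → ℝ, (∀ i, σ i = 1 ∨ σ i = -1) → 0 < F σ)
    (d : ι → ℝ) (hd : ∀ i, |d i| ≤ 1) : 0 < F d := by
  suffices ∀ s : Finset ι, ∀ d : ι → ℝ, (∀ i, |d i| ≤ 1) →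
      (∀ i ∉ s, d i = 1 ∨ d i = -1) → 0 < F d from
    this Finset.univ d hd (by simp)
  intro s
  induction s using Finset.induction_on with
  | empty => exact fun d _ hσ => hvert d fun i => hσ i (Finset.notMem_empty i)
  | insert j s _ ih =>
    intro d hd hσ
    obtain ⟨A, B, hAB⟩ := hF d j
    have hend : ∀ c : ℝ, (c = 1 ∨ c = -1) → 0 < A + c * B := by
      intro c hc
      rw [← hAB]
      refine ih _ (fun i => ?_) (fun i hi => ?_) <;> rcases eq_or_ne i j with rfl | hij
      · rcases hc with rfl | rfl <;> simp
      · simpa [hij] using hd i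
      · simpa using hc
      · simpa [hij] using hσ i (by simp [hij, hi])
    have h₁ := hend 1 (.inl rfl)
    have h₂ := hend (-1) (.inr rfl)
    rw [← update_eq_self j d, hAB]
    exact pos_of_affine_of_abs_le_one (by linarith) (by linarith) (hd j)

lemma det_one_add_mul_diagonal_pos (S : Matrix ι ι ℝ)
    (hS : ∀ σ : ι → ℝ, (∀ i, σ i = 1 ∨ σ i = -1) → 0 < (1 + S * diagonal σ).det)
    (d : ι → ℝ) (hd : ∀ i, |d i| ≤ 1) : 0 < (1 + S * diagonal d).det :=
  pos_of_multiaffine_of_abs_le_one _ (exists_det_one_add_mul_diagonal_update_eq S) hS d hd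

end

lemma exists_abs_sub_abs_eq_mul (a b : ℝ) : ∃ d, |d| ≤ 1 ∧ |a| - |b| = d * (a - b) := by
  rcases eq_or_ne a b with rfl | hab
  · exact ⟨0, by simp⟩
  have hab' : a - b ≠ 0 := sub_ne_zero.2 hab
  refine ⟨(|a| - |b|) / (a - b), ?_, by field_simp⟩
  rw [abs_div, div_le_one (abs_pos.2 hab')]
  exact abs_abs_sub_abs_le_abs_sub a b

lemma exists_pos_mul_norm_le_norm_of_posHomogeneous {E F : Type*} [NormedAddCommGroup E]
    [NormedSpace ℝ E] [FiniteDimensional ℝ E] [NormedAddCommGroup F] [NormedSpace ℝ F]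
    {f : E → F} (hf : Continuous f) (hsmul : ∀ t : ℝ, 0 ≤ t → ∀ x, f (t • x) = t • f x)
    (hzero : ∀ x, f x = 0 → x = 0) : ∃ c > 0, ∀ x, c * ‖x‖ ≤ ‖f x‖ := by
  rcases subsingleton_or_nontrivial E with hE | hE
  · exact ⟨1, one_pos, fun x => by simp [Subsingleton.elim x 0]⟩
  obtain ⟨u, hu, hmin⟩ := (isCompact_sphere (0 : E) 1).exists_isMinOn
    (NormedSpace.sphere_nonempty.2 zero_le_one) hf.norm.continuousOn
  have hu1 : ‖u‖ = 1 := by simpa using hu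
  refine ⟨‖f u‖, norm_pos_iff.2 fun h => by simp [hzero u h] at hu1, fun x => ?_⟩
  rcases eq_or_ne x 0 with rfl | hx
  · simp
  have hx' : 0 < ‖x‖ := norm_pos_iff.2 hx
  have hle : ‖f u‖ ≤ ‖f (‖x‖⁻¹ • x)‖ := hmin (by simp [norm_smul, hx'.ne'])
  calc ‖f u‖ * ‖x‖ ≤ ‖f (‖x‖⁻¹ • x)‖ * ‖x‖ := by gcongr
    _ = ‖f x‖ := by
      rw [← abs_of_pos hx', ← Real.norm_eq_abs, mul_comm, ← norm_smul, ← hsmul _ (norm_nonneg _),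
        Real.norm_eq_abs, abs_of_pos hx', smul_inv_smul₀ hx'.ne']

lemma sq_norm_le_dotProduct_self {ι : Type*} [Fintype ι] (v : ι → ℝ) : ‖v‖ ^ 2 ≤ v ⬝ᵥ v := by
  have hv : 0 ≤ v ⬝ᵥ v := Finset.sum_nonneg fun i _ => mul_self_nonneg (v i)
  rw [← Real.le_sqrt (norm_nonneg v) hv, pi_norm_le_iff_of_nonneg (Real.sqrt_nonneg _)]
  refine fun i => Real.abs_le_sqrt ?_
  have := Finset.single_le_sum (fun j _ => mul_self_nonneg (v j)) (Finset.mem_univ i)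
  simpa [sq, dotProduct] using this

lemma dotProduct_self_add_le {ι : Type*} [Fintype ι] (a b : ι → ℝ) :
    (a + b) ⬝ᵥ (a + b) ≤ 2 * (a ⬝ᵥ a) + 2 * (b ⬝ᵥ b) := by
  simp only [dotProduct, Finset.mul_sum, ← Finset.sum_add_distrib]
  exact Finset.sum_le_sum fun i _ => by simp only [Pi.add_apply]; nlinarith [sq_nonneg (a i - b i)]

lemma nonneg_of_forall_nonneg_mul_add_mul_sq {a K t₀ : ℝ} (ht₀ : 0 < t₀)
    (h : ∀ t, 0 < t → t ≤ t₀ → 0 ≤ t * a + K * t ^ 2) : 0 ≤ a := by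
  have hlim : Tendsto (fun t => -(K * t)) (𝓝[>] 0) (𝓝 0) :=
    ((by fun_prop : Continuous fun t : ℝ => -(K * t)).tendsto' 0 0 (by simp)).mono_left
      nhdsWithin_le_nhds
  refine le_of_tendsto hlim ?_
  filter_upwards [Ioc_mem_nhdsGT ht₀] with t ⟨ht, htt₀⟩
  have := h t ht htt₀
  rw [neg_le_iff_add_nonneg']
  nlinarith

-- `x` minimises `s ↦ (s - x) ρ + |s| π` to first order, i.e. `-ρ ∈ π · ∂|·|(x) ⊆ π · [-1, 1]`.
lemma exists_abs_le_one_add_mul_eq_zero {x ρ π K : ℝ}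
    (h : ∀ s, 0 ≤ (s - x) * ρ + (|s| - |x|) * π + K * (s - x) ^ 2) :
    ∃ d, |d| ≤ 1 ∧ ρ + d * π = 0 := by
  wlog hx : 0 ≤ x generalizing x ρ
  · obtain ⟨d, hd, hρ⟩ := this (x := -x) (ρ := -ρ) (fun s => by
      have := h (-s)
      rw [abs_neg] at this
      rw [abs_neg]
      linarith) (by linarith)
    exact ⟨-d, by rwa [abs_neg], by linarith⟩
  rcases eq_or_lt_of_le hx with rfl | hx
  · have h₁ : 0 ≤ ρ + π := nonneg_of_forall_nonneg_mul_add_mul_sq (K := K) one_pos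
      fun t ht _ => by
        have := h t
        rw [abs_of_pos ht, abs_zero] at this
        linarith
    have h₂ : 0 ≤ π - ρ := nonneg_of_forall_nonneg_mul_add_mul_sq (K := K) one_pos
      fun t ht _ => by
        have := h (-t)
        rw [abs_neg, abs_of_pos ht, abs_zero] at this
        linarith
    rcases eq_or_lt_of_le (show 0 ≤ π by linarith) with hπ | hπ
    · exact ⟨0, by simp, by linarith⟩
    refine ⟨-ρ / π, ?_, by field_simp; ring⟩
    rw [abs_div, abs_neg, abs_of_pos hπ, div_le_one hπ, abs_le]
    constructor <;> linarith
  · have h₁ : 0 ≤ ρ + π := nonneg_of_forall_nonneg_mul_add_mul_sq (K := K) hx fun t ht _ => by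
      have := h (x + t)
      rw [abs_of_pos (by linarith), abs_of_pos hx] at this
      linarith
    have h₂ : 0 ≤ -(ρ + π) := nonneg_of_forall_nonneg_mul_add_mul_sq (K := K) hx
      fun t ht htx => by
        have := h (x - t)
        rw [abs_of_nonneg (by linarith), abs_of_pos hx] at this
        linarith
    exact ⟨1, by simp, by linarith⟩

section
variable {ι : Type*} [Fintype ι] (S : Matrix ι ι ℝ)

def addMulVecAbs (z : ι → ℝ) : ι → ℝ := z + S *ᵥ fun i => |z i|

lemma addMulVecAbs_zero : addMulVecAbs S 0 = 0 := by
  simp only [addMulVecAbs, Pi.zero_apply, abs_zero, zero_add]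
  exact S.mulVec_zero

lemma addMulVecAbs_smul {t : ℝ} (ht : 0 ≤ t) (z : ι → ℝ) :
    addMulVecAbs S (t • z) = t • addMulVecAbs S z := by
  have : (fun i => |(t • z) i|) = t • fun i => |z i| := by
    ext i
    simp [abs_mul, abs_of_nonneg ht]
  simp only [addMulVecAbs, this, mulVec_smul, smul_add]

lemma continuous_addMulVecAbs : Continuous (addMulVecAbs S) := by
  unfold addMulVecAbs
  fun_prop

variable [DecidableEq ι]

lemma exists_addMulVecAbs_sub_eq (x y : ι → ℝ) : ∃ d : ι → ℝ, (∀ i, |d i| ≤ 1) ∧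
    addMulVecAbs S x - addMulVecAbs S y = (1 + S * diagonal d) *ᵥ (x - y) := by
  choose d hd hxy using fun i => exists_abs_sub_abs_eq_mul (x i) (y i)
  refine ⟨d, hd, ?_⟩
  have habs : (fun i => |x i|) - (fun i => |y i|) = diagonal d *ᵥ (x - y) := by
    ext i
    simp [mulVec_diagonal, hxy]
  rw [add_mulVec, one_mulVec, ← mulVec_mulVec, ← habs, mulVec_sub, addMulVecAbs, addMulVecAbs]
  abel

lemma addMulVecAbs_update (z : ι → ℝ) (i : ι) (s : ℝ) :
    addMulVecAbs S (update z i s) =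
      addMulVecAbs S z + (Pi.single i (s - z i) + (|s| - |z i|) • S.col i) := by
  have hz : update z i s = z + Pi.single i (s - z i) := by
    ext k
    rcases eq_or_ne k i with rfl | hk <;> simp [*]
  have habs : (fun k => |update z i s k|) = (fun k => |z k|) + Pi.single i (|s| - |z i|) := by
    ext k
    rcases eq_or_ne k i with rfl | hk <;> simp [*]
  rw [addMulVecAbs, habs, mulVec_add, mulVec_single, hz, addMulVecAbs]
  ext k
  simp only [Pi.add_apply, Pi.smul_apply, col_apply, MulOpposite.smul_eq_mul_unop,
    MulOpposite.unop_op, smul_eq_mul]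
  ring

variable {S}

lemma addMulVecAbs_injective
    (hS : ∀ d : ι → ℝ, (∀ i, |d i| ≤ 1) → (1 + S * diagonal d).det ≠ 0) :
    Injective (addMulVecAbs S) := by
  intro x y hxy
  obtain ⟨d, hd, hsub⟩ := exists_addMulVecAbs_sub_eq S x y
  rw [hxy, sub_self] at hsub
  exact sub_eq_zero.1 (eq_zero_of_mulVec_eq_zero (hS d hd) hsub.symm)

lemma exists_forall_residual_le
    (hS : ∀ d : ι → ℝ, (∀ i, |d i| ≤ 1) → (1 + S * diagonal d).det ≠ 0) (b : ι → ℝ) :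
    ∃ z, ∀ y, (addMulVecAbs S z - b) ⬝ᵥ (addMulVecAbs S z - b) ≤
      (addMulVecAbs S y - b) ⬝ᵥ (addMulVecAbs S y - b) := by
  obtain ⟨c, hc, hcoer⟩ := exists_pos_mul_norm_le_norm_of_posHomogeneous
    (continuous_addMulVecAbs S) (fun t ht => addMulVecAbs_smul S ht)
    fun x hx => addMulVecAbs_injective hS (hx.trans (addMulVecAbs_zero S).symm)
  have hnorm : Tendsto (fun z => ‖addMulVecAbs S z - b‖) (cocompact _) atTop := by
    refine tendsto_atTop_mono (fun z => ?_) <| tendsto_atTop_add_const_right _ (-‖b‖)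
      (tendsto_norm_cocompact_atTop.const_mul_atTop hc)
    linarith [hcoer z, norm_sub_norm_le (addMulVecAbs S z) b]
  have hcont := continuous_addMulVecAbs S
  refine (by fun_prop : Continuous fun z => (addMulVecAbs S z - b) ⬝ᵥ (addMulVecAbs S z - b))
    |>.exists_forall_le <| tendsto_atTop_mono (fun z => sq_norm_le_dotProduct_self _) ?_
  exact (tendsto_pow_atTop two_ne_zero).comp hnorm

lemma residual_coord_first_order {b z : ι → ℝ}
    (hz : ∀ y, (addMulVecAbs S z - b) ⬝ᵥ (addMulVecAbs S z - b) ≤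
      (addMulVecAbs S y - b) ⬝ᵥ (addMulVecAbs S y - b)) (i : ι) (s : ℝ) :
    0 ≤ (s - z i) * (addMulVecAbs S z - b) i +
      (|s| - |z i|) * ((addMulVecAbs S z - b) ᵥ* S) i +
      (1 + S.col i ⬝ᵥ S.col i) * (s - z i) ^ 2 := by
  set r := addMulVecAbs S z - b
  set δ := s - z i
  set ε := |s| - |z i|
  set w := Pi.single i δ + ε • S.col i
  have hmin : r ⬝ᵥ r ≤ (r + w) ⬝ᵥ (r + w) := by
    simpa only [addMulVecAbs_update, add_sub_right_comm] using hz (update z i s)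
  have hwr : w ⬝ᵥ r = δ * r i + ε * (r ᵥ* S) i := by
    rw [add_dotProduct, single_dotProduct, smul_dotProduct, smul_eq_mul, dotProduct_comm]
    rfl
  have hε : ε ^ 2 ≤ δ ^ 2 := sq_le_sq.2 (abs_abs_sub_abs_le_abs_sub s (z i))
  have hww : w ⬝ᵥ w ≤ 2 * (1 + S.col i ⬝ᵥ S.col i) * δ ^ 2 := by
    have hcol : 0 ≤ S.col i ⬝ᵥ S.col i := Finset.sum_nonneg fun k _ => mul_self_nonneg _
    calc w ⬝ᵥ w ≤ 2 * (Pi.single i δ ⬝ᵥ Pi.single i δ) + 2 * ((ε • S.col i) ⬝ᵥ (ε • S.col i)) :=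
          dotProduct_self_add_le _ _
      _ = 2 * δ ^ 2 + 2 * (ε ^ 2 * (S.col i ⬝ᵥ S.col i)) := by
          simp only [dotProduct_single, Pi.single_eq_same, dotProduct_smul, smul_dotProduct,
            smul_eq_mul]
          ring
      _ ≤ 2 * (1 + S.col i ⬝ᵥ S.col i) * δ ^ 2 := by nlinarith
  have hexp : (r + w) ⬝ᵥ (r + w) = r ⬝ᵥ r + 2 * (w ⬝ᵥ r) + w ⬝ᵥ w := by
    simp only [add_dotProduct, dotProduct_add, dotProduct_comm r w]
    ring
  nlinarith

lemma addMulVecAbs_surjective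
    (hS : ∀ d : ι → ℝ, (∀ i, |d i| ≤ 1) → (1 + S * diagonal d).det ≠ 0) :
    Surjective (addMulVecAbs S) := by
  intro b
  obtain ⟨z, hz⟩ := exists_forall_residual_le hS b
  choose d hd hrd using fun i =>
    exists_abs_le_one_add_mul_eq_zero (residual_coord_first_order hz i)
  set r := addMulVecAbs S z - b
  have hker : r ᵥ* (1 + S * diagonal d) = 0 := by
    ext i
    simp [vecMul_add, ← vecMul_vecMul, vecMul_diagonal, mul_comm, hrd]
  exact ⟨z, sub_eq_zero.1 (eq_zero_of_vecMul_eq_zero (hS d hd) hker)⟩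

end

theorem stmt_7 {n : ℕ} (S : Matrix (Fin n) (Fin n) ℝ)
    (h : ∀ E : Matrix (Fin n) (Fin n) ℝ, IsSignature E → 0 < (1 - S * E).det) :
    Function.Bijective (fun z : Fin n → ℝ => z + S.mulVec fun i => |z i|) := by
  have hcube : ∀ d : Fin n → ℝ, (∀ i, |d i| ≤ 1) → (1 + S * diagonal d).det ≠ 0 := by
    refine fun d hd => (det_one_add_mul_diagonal_pos S (fun σ hσ => ?_) d hd).ne'
    have hsig : IsSignature (diagonal (-σ)) :=
      ⟨-σ, fun i => (hσ i).symm.imp (by simp [·]) (by simp [·]), rfl⟩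
    have hneg : 1 - S * diagonal (-σ) = 1 + S * diagonal σ := by
      rw [show diagonal (-σ) = -diagonal σ from (diagonal_neg σ).symm, mul_neg, sub_neg_eq_add]
    exact hneg ▸ h _ hsig
  exact ⟨addMulVecAbs_injective hcube, addMulVecAbs_surjective hcube⟩
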